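/- arXiv:1403.1436 — 3 statements merged into one kernel-verified Lean document; each statement's English description precedes it below -/
import Mathlib

section
/- Decomposition theorem (Theorem 2.3, abstract form): The subspace Hor of horizontal vectors equals the orthogonal complement Tᗮ if and only if L leaves both T and Tᗮ invariant, i.e. Hor = Tᗮ ↔ ((∀ h ∈ T, L h ∈ T) ∧ (∀ h ∈ Tᗮ, L h ∈ Tᗮ)). -/
open scoped RealInnerProductSpace

/-!
Positivity of `L` makes `Hor` meet `T` trivially (for `h ∈ T ∩ Hor`, `⟪L h, h⟫ = 0`). Since
`T ⊔ Tᗮ = ⊤`, modularity of the subspace lattice turns `Tᗮ ≤ Hor` into `Tᗮ = Hor`, so `Hor = Tᗮ`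
just says that `L` maps `Tᗮ` into itself. By symmetry `L` then also maps `Tᗮᗮ = T` into itself.
-/

namespace Submodule

variable {V : Type*} [NormedAddCommGroup V] [InnerProductSpace ℝ V]

theorem orthogonal_orthogonal_of_isCompl {K : Submodule ℝ V} (hK : IsCompl K Kᗮ) : Kᗮᗮ = K :=
  ((le_iff_eq_of_codisjoint_of_disjoint hK.codisjoint Kᗮ.orthogonal_disjoint).mp
    K.le_orthogonal_orthogonal).symm

theorem disjoint_comap_orthogonal_of_pos {L : V →ₗ[ℝ] V} (hpos : ∀ h : V, h ≠ 0 → 0 < ⟪L h, h⟫)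
    (K : Submodule ℝ V) : Disjoint K (Kᗮ.comap L) :=
  disjoint_def.mpr fun h hh hLh => by
    by_contra hne
    exact (hpos h hne).ne' ((mem_orthogonal' K _).mp hLh h hh)

theorem comap_orthogonal_eq_orthogonal_iff {K : Submodule ℝ V} (hK : IsCompl K Kᗮ)
    {L : V →ₗ[ℝ] V} (hpos : ∀ h : V, h ≠ 0 → 0 < ⟪L h, h⟫) :
    Kᗮ.comap L = Kᗮ ↔ ∀ h ∈ Kᗮ, L h ∈ Kᗮ :=
  eq_comm.trans (le_iff_eq_of_codisjoint_of_disjoint hK.symm.codisjoint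
    (disjoint_comap_orthogonal_of_pos hpos K)).symm

end Submodule

namespace LinearMap.IsSymmetric

variable {V : Type*} [NormedAddCommGroup V] [InnerProductSpace ℝ V] {L : V →ₗ[ℝ] V}

theorem mapsTo_orthogonal (hL : L.IsSymmetric) {K : Submodule ℝ V} (hK : ∀ h ∈ K, L h ∈ K) :
    ∀ h ∈ Kᗮ, L h ∈ Kᗮ := fun h hh k hk => by
  rw [← hL]
  exact hh (L k) (hK k hk)

theorem invariant_and_orthogonal_invariant_iff (hL : L.IsSymmetric) {K : Submodule ℝ V}
    (hK : IsCompl K Kᗮ) :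
    ((∀ h ∈ K, L h ∈ K) ∧ ∀ h ∈ Kᗮ, L h ∈ Kᗮ) ↔ ∀ h ∈ Kᗮ, L h ∈ Kᗮ := by
  refine ⟨And.right, fun hinv => ⟨?_, hinv⟩⟩
  rw [← Submodule.orthogonal_orthogonal_of_isCompl hK]
  exact hL.mapsTo_orthogonal hinv

end LinearMap.IsSymmetric

/-- **Decomposition theorem** (abstract form): the horizontal subspace
`Hor = {h : L h ∈ Tᗮ}` equals `Tᗮ` if and only if `L` leaves both `T` and `Tᗮ`
invariant. -/
theorem horizontality_eq_normality_iff
    {V : Type*} [NormedAddCommGroup V] [InnerProductSpace ℝ V]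
    (T : Submodule ℝ V) (hcompl : IsCompl T Tᗮ)
    (L : V →ₗ[ℝ] V)
    (hsym : ∀ h k : V, ⟪L h, k⟫ = ⟪h, L k⟫)
    (hpos : ∀ h : V, h ≠ 0 → 0 < ⟪L h, h⟫) :
    {h : V | L h ∈ Tᗮ} = (Tᗮ : Set V) ↔
      ((∀ h ∈ T, L h ∈ T) ∧ (∀ h ∈ Tᗮ, L h ∈ Tᗮ)) := by
  have hL : L.IsSymmetric := hsym
  rw [hL.invariant_and_orthogonal_invariant_iff hcompl,
    ← Submodule.comap_orthogonal_eq_orthogonal_iff hcompl hpos]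
  exact SetLike.coe_set_eq (p := Tᗮ.comap L)
end

section
/- Lemma 3.2 (metric of order one dominating H¹): Let h : ℝ → EuclideanSpace ℝ (Fin 2) be smooth and 2π-periodic, and set a := ⟨h, n⟩ and b := ⟨h, v⟩ (so h = a • n + b • v). Then ∫₀^{2π} (‖h(θ)‖² + ‖(D_s h)(θ)‖²)·‖(deriv c)(θ)‖ dθ ≤ ∫₀^{2π} ((1 + 2κ(θ)²)(a(θ)² + b(θ)²) + 2(D_s a)(θ)² + 2(D_s b)(θ)²)·‖(deriv c)(θ)‖ dθ. (The two sides are the standard Sobolev H¹ metric G^{H¹}_c(h,h) = ∫ (|h|² + |D_s h|²) ds and the metric G_c(h,h) of equation (3.3), written with arclength measure ds = ‖deriv c‖ dθ.) -/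
open scoped RealInnerProductSpace
open Real

/-- Rotation by `π/2` in the plane: `J (x₁, x₂) = (−x₂, x₁)`. -/
noncomputable def J (x : EuclideanSpace ℝ (Fin 2)) : EuclideanSpace ℝ (Fin 2) :=
  WithLp.toLp 2 ![-x 1, x 0]

/-- Arclength derivative along the curve `c`: `D_s f = (deriv f) / ‖deriv c‖`. -/
noncomputable def Ds {E : Type*} [NormedAddCommGroup E] [NormedSpace ℝ E]
    (c : ℝ → EuclideanSpace ℝ (Fin 2)) (f : ℝ → E) (θ : ℝ) : E :=
  ‖deriv c θ‖⁻¹ • deriv f θ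

/-- Unit tangent `v = (deriv c)/‖deriv c‖` of the plane curve `c`. -/
noncomputable def tang (c : ℝ → EuclideanSpace ℝ (Fin 2)) (θ : ℝ) :
    EuclideanSpace ℝ (Fin 2) :=
  ‖deriv c θ‖⁻¹ • deriv c θ

/-- Unit normal `n = J ∘ v` of the plane curve `c`. -/
noncomputable def nor (c : ℝ → EuclideanSpace ℝ (Fin 2)) (θ : ℝ) :
    EuclideanSpace ℝ (Fin 2) :=
  J (tang c θ)

/-- Curvature `κ = ⟪D_s v, n⟫` of the plane curve `c`. -/
noncomputable def kappa (c : ℝ → EuclideanSpace ℝ (Fin 2)) (θ : ℝ) : ℝ :=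
  ⟪Ds c (tang c) θ, nor c θ⟫

/-- `J` as a continuous linear map. -/
noncomputable def Jlin : EuclideanSpace ℝ (Fin 2) →L[ℝ] EuclideanSpace ℝ (Fin 2) :=
  LinearMap.toContinuousLinearMap
    { toFun := J
      map_add' := by
        intro x y; ext i; fin_cases i <;> simp [J] <;> ring
      map_smul' := by
        intro r x; ext i; fin_cases i <;> simp [J, mul_comm] }

lemma inner_decomp (v x y : EuclideanSpace ℝ (Fin 2)) (hv : ⟪v, v⟫ = 1) :
    ⟪x, y⟫ = ⟪x, v⟫ * ⟪y, v⟫ + ⟪x, J v⟫ * ⟪y, J v⟫ := by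
  simp only [PiLp.inner_apply, RCLike.inner_apply, conj_trivial, Fin.sum_univ_two, J, PiLp.toLp_apply,
    Matrix.cons_val_zero, Matrix.cons_val_one, Matrix.head_cons] at *
  linear_combination (-(x 0 * y 0) - x 1 * y 1) * hv

lemma inner_J_self (x : EuclideanSpace ℝ (Fin 2)) : ⟪J x, x⟫ = 0 := by
  simp only [PiLp.inner_apply, RCLike.inner_apply, conj_trivial, Fin.sum_univ_two, J, PiLp.toLp_apply,
    Matrix.cons_val_zero, Matrix.cons_val_one, Matrix.head_cons]
  ring

lemma inner_J_J (x y : EuclideanSpace ℝ (Fin 2)) : ⟪J x, J y⟫ = ⟪x, y⟫ := by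
  simp only [PiLp.inner_apply, RCLike.inner_apply, conj_trivial, Fin.sum_univ_two, J, PiLp.toLp_apply,
    Matrix.cons_val_zero, Matrix.cons_val_one, Matrix.head_cons]
  ring

set_option maxHeartbeats 1000000 in
/-- **Lemma 3.2**: the metric `∫ ((1+2κ²)(a²+b²) + 2(D_s a)² + 2(D_s b)²) ds`
dominates the standard Sobolev `H¹` metric `∫ (|h|² + |D_s h|²) ds`, where
`a = ⟪h, n⟫`, `b = ⟪h, v⟫` and `ds = ‖deriv c‖ dθ`. -/
theorem order_one_metric_dominates_H1
    (c : ℝ → EuclideanSpace ℝ (Fin 2))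
    (hc : ContDiff ℝ (⊤ : ℕ∞) c) (hper : Function.Periodic c (2 * π))
    (himm : ∀ θ : ℝ, deriv c θ ≠ 0)
    (h : ℝ → EuclideanSpace ℝ (Fin 2))
    (hsm : ContDiff ℝ (⊤ : ℕ∞) h) (hhper : Function.Periodic h (2 * π))
    (a b : ℝ → ℝ)
    (hadef : a = fun θ => ⟪h θ, nor c θ⟫)
    (hbdef : b = fun θ => ⟪h θ, tang c θ⟫) :
    (∫ θ in (0:ℝ)..(2 * π),
        (‖h θ‖ ^ 2 + ‖Ds c h θ‖ ^ 2) * ‖deriv c θ‖) ≤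
      ∫ θ in (0:ℝ)..(2 * π),
        ((1 + 2 * kappa c θ ^ 2) * (a θ ^ 2 + b θ ^ 2)
          + 2 * Ds c a θ ^ 2 + 2 * Ds c b θ ^ 2) * ‖deriv c θ‖ := by
  have hone : (1 : WithTop ℕ∞) ≤ ((⊤ : ℕ∞) : WithTop ℕ∞) := by
    exact_mod_cast (le_top : (1 : ℕ∞) ≤ ⊤)
  have hci : ContDiff ℝ ((⊤ : ℕ∞) : WithTop ℕ∞) c := hc.of_le (by simp)
  have hsmi : ContDiff ℝ ((⊤ : ℕ∞) : WithTop ℕ∞) h := hsm.of_le (by simp)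
  have hcd : ContDiff ℝ ((⊤ : ℕ∞) : WithTop ℕ∞) (deriv c) := (contDiff_infty_iff_deriv.mp hci).2
  have hr : ∀ θ, ‖deriv c θ‖ ≠ 0 := fun θ => norm_ne_zero_iff.mpr (himm θ)
  have htang : ContDiff ℝ ((⊤ : ℕ∞) : WithTop ℕ∞) (tang c) := by
    rw [contDiff_iff_contDiffAt]
    intro θ
    exact ((hcd.contDiffAt.norm ℝ (himm θ)).inv (hr θ)).smul hcd.contDiffAt
  have hnor : ContDiff ℝ ((⊤ : ℕ∞) : WithTop ℕ∞) (nor c) := by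
    have e : nor c = fun θ => Jlin (tang c θ) := rfl
    rw [e]; exact Jlin.contDiff.comp htang
  have ha : ContDiff ℝ ((⊤ : ℕ∞) : WithTop ℕ∞) a := by rw [hadef]; exact hsmi.inner ℝ hnor
  have hb : ContDiff ℝ ((⊤ : ℕ∞) : WithTop ℕ∞) b := by rw [hbdef]; exact hsmi.inner ℝ htang
  have hvunit : ∀ t, ⟪tang c t, tang c t⟫ = 1 := by
    intro t
    have hn1 : ‖tang c t‖ = 1 := by
      rw [tang, norm_smul, norm_inv, norm_norm]
      exact inv_mul_cancel₀ (hr t)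
    rw [real_inner_self_eq_norm_sq, hn1]; norm_num
  have hnvzero : ∀ t, ⟪nor c t, tang c t⟫ = 0 := fun t => inner_J_self (tang c t)
  have hnunit : ∀ t, ⟪nor c t, nor c t⟫ = 1 := fun t => by
    rw [nor, inner_J_J]; exact hvunit t
  -- pointwise inequality
  have key : ∀ θ, (‖h θ‖ ^ 2 + ‖Ds c h θ‖ ^ 2) * ‖deriv c θ‖ ≤
      ((1 + 2 * kappa c θ ^ 2) * (a θ ^ 2 + b θ ^ 2)
        + 2 * Ds c a θ ^ 2 + 2 * Ds c b θ ^ 2) * ‖deriv c θ‖ := by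
    intro θ
    have hrpos : 0 < ‖deriv c θ‖ := norm_pos_iff.mpr (himm θ)
    set r : ℝ := ‖deriv c θ‖ with hrdef
    have hvd : HasDerivAt (tang c) (deriv (tang c) θ) θ :=
      (htang.differentiable (by simp) θ).hasDerivAt
    have hnd : HasDerivAt (nor c) (deriv (nor c) θ) θ :=
      (hnor.differentiable (by simp) θ).hasDerivAt
    have hhd : HasDerivAt h (deriv h θ) θ := (hsmi.differentiable (by simp) θ).hasDerivAt
    set v' : EuclideanSpace ℝ (Fin 2) := deriv (tang c) θ with hv'def
    set n' : EuclideanSpace ℝ (Fin 2) := deriv (nor c) θ with hn'def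
    set h' : EuclideanSpace ℝ (Fin 2) := deriv h θ with hh'def
    set vθ : EuclideanSpace ℝ (Fin 2) := tang c θ with hvθ
    set nθ : EuclideanSpace ℝ (Fin 2) := nor c θ with hnθ
    have hJv : J vθ = nθ := rfl
    -- derivative of ⟪v,v⟫ = 1
    have dvv : ⟪vθ, v'⟫ + ⟪v', vθ⟫ = 0 := by
      have h1 : HasDerivAt (fun t => ⟪tang c t, tang c t⟫) (⟪vθ, v'⟫ + ⟪v', vθ⟫) θ :=
        hvd.inner ℝ hvd
      have h2 : (fun t => ⟪tang c t, tang c t⟫) = fun _ => (1:ℝ) := funext hvunit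
      rw [h2] at h1
      exact h1.unique (hasDerivAt_const θ 1)
    have dnn : ⟪nθ, n'⟫ + ⟪n', nθ⟫ = 0 := by
      have h1 : HasDerivAt (fun t => ⟪nor c t, nor c t⟫) (⟪nθ, n'⟫ + ⟪n', nθ⟫) θ :=
        hnd.inner ℝ hnd
      have h2 : (fun t => ⟪nor c t, nor c t⟫) = fun _ => (1:ℝ) := funext hnunit
      rw [h2] at h1
      exact h1.unique (hasDerivAt_const θ 1)
    have dnv : ⟪nθ, v'⟫ + ⟪n', vθ⟫ = 0 := by
      have h1 : HasDerivAt (fun t => ⟪nor c t, tang c t⟫) (⟪nθ, v'⟫ + ⟪n', vθ⟫) θ :=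
        hnd.inner ℝ hvd
      have h2 : (fun t => ⟪nor c t, tang c t⟫) = fun _ => (0:ℝ) := funext hnvzero
      rw [h2] at h1
      exact h1.unique (hasDerivAt_const θ 0)
    have hvv' : ⟪v', vθ⟫ = 0 := by
      have := real_inner_comm vθ v'; linarith [dvv]
    have hnn' : ⟪n', nθ⟫ = 0 := by
      have := real_inner_comm nθ n'; linarith [dnn]
    -- curvature
    have hk : ⟪v', nθ⟫ = r * kappa c θ := by
      have : kappa c θ = r⁻¹ * ⟪v', nθ⟫ := by
        rw [kappa, Ds, real_inner_smul_left]
      rw [this]; field_simp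
    have hn'v : ⟪n', vθ⟫ = -(r * kappa c θ) := by
      have := real_inner_comm nθ v'
      have h2 := real_inner_comm v' nθ
      linarith [dnv, hk]
    -- quantities
    set A : ℝ := r⁻¹ * ⟪h', nθ⟫ with hA
    set B : ℝ := r⁻¹ * ⟪h', vθ⟫ with hB
    set k : ℝ := kappa c θ with hkdef
    -- Ds h decomposition
    have hDsh : Ds c h θ = r⁻¹ • h' := rfl
    have e2 : ‖Ds c h θ‖ ^ 2 = A ^ 2 + B ^ 2 := by
      rw [← real_inner_self_eq_norm_sq, hDsh]
      rw [inner_decomp vθ _ _ (hvunit θ), hJv]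
      simp only [real_inner_smul_left, real_inner_smul_right, hA, hB]
      ring
    have e1 : ‖h θ‖ ^ 2 = a θ ^ 2 + b θ ^ 2 := by
      rw [← real_inner_self_eq_norm_sq]
      rw [inner_decomp vθ _ _ (hvunit θ), hJv]
      rw [hadef, hbdef]
      ring
    -- Ds a
    have haθ : a θ = ⟪h θ, nθ⟫ := by rw [hadef]
    have hbθ : b θ = ⟪h θ, vθ⟫ := by rw [hbdef]
    have had : HasDerivAt a (⟪h θ, n'⟫ + ⟪h', nθ⟫) θ := by
      rw [hadef]; exact hhd.inner ℝ hnd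
    have hbd : HasDerivAt b (⟪h θ, v'⟫ + ⟪h', vθ⟫) θ := by
      rw [hbdef]; exact hhd.inner ℝ hvd
    have hhn' : ⟪h θ, n'⟫ = -(r * k) * b θ := by
      rw [inner_decomp vθ _ _ (hvunit θ), hJv, hn'v, hnn', hbθ]
      ring
    have hhv' : ⟪h θ, v'⟫ = (r * k) * a θ := by
      rw [inner_decomp vθ _ _ (hvunit θ), hJv, hvv', hk, haθ]
      ring
    have e3 : Ds c a θ = A - k * b θ := by
      rw [Ds, had.deriv, smul_eq_mul, hhn', hA, ← hrdef]
      field_simp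
      ring
    have e4 : Ds c b θ = B + k * a θ := by
      rw [Ds, hbd.deriv, smul_eq_mul, hhv', hB, ← hrdef]
      field_simp
      ring
    apply mul_le_mul_of_nonneg_right _ (le_of_lt hrpos)
    rw [e1, e2, e3, e4]
    nlinarith [sq_nonneg (A - 2 * k * b θ), sq_nonneg (B + 2 * k * a θ)]
  -- integrability
  have hcr : Continuous fun θ => ‖deriv c θ‖ := (hcd.continuous).norm
  have hcri : Continuous fun θ => ‖deriv c θ‖⁻¹ := hcr.inv₀ hr
  have hDsh_cont : Continuous fun θ => Ds c h θ :=
    hcri.smul (hsmi.continuous_deriv hone)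
  have hk_cont : Continuous fun θ => kappa c θ := by
    have : Continuous fun θ => Ds c (tang c) θ :=
      hcri.smul (htang.continuous_deriv hone)
    exact this.inner hnor.continuous
  have hDa_cont : Continuous fun θ => Ds c a θ :=
    hcri.smul (ha.continuous_deriv hone)
  have hDb_cont : Continuous fun θ => Ds c b θ :=
    hcri.smul (hb.continuous_deriv hone)
  have hint1 : IntervalIntegrable
      (fun θ => (‖h θ‖ ^ 2 + ‖Ds c h θ‖ ^ 2) * ‖deriv c θ‖)
      MeasureTheory.volume 0 (2 * π) :=
    (((hsmi.continuous.norm.pow 2).add (hDsh_cont.norm.pow 2)).mul hcr).intervalIntegrable _ _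
  have hint2 : IntervalIntegrable
      (fun θ => ((1 + 2 * kappa c θ ^ 2) * (a θ ^ 2 + b θ ^ 2)
          + 2 * Ds c a θ ^ 2 + 2 * Ds c b θ ^ 2) * ‖deriv c θ‖)
      MeasureTheory.volume 0 (2 * π) := by
    apply Continuous.intervalIntegrable
    exact ((((continuous_const.add (continuous_const.mul (hk_cont.pow 2))).mul
        ((ha.continuous.pow 2).add (hb.continuous.pow 2))).add
        (continuous_const.mul (hDa_cont.pow 2))).add
        (continuous_const.mul (hDb_cont.pow 2))).mul hcr
  exact intervalIntegral.integral_mono_on (by positivity) hint1 hint2 (fun θ _ => key θ)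
end

section
/- Theorem 3.4, explicit case l = 2 (a metric dominating H²): Let h : ℝ → EuclideanSpace ℝ (Fin 2) be smooth and 2π-periodic, and set a := ⟨h, n⟩ and b := ⟨h, v⟩. Then ∫₀^{2π} (‖h‖² + ‖D_s h‖² + ‖D_s² h‖²)·‖deriv c‖ dθ ≤ ∫₀^{2π} (4(D_s²a)² + (16κ² + 2)(D_s a)² + (4(D_s κ)² + 4κ⁴ + 2κ² + 1)a² + 4(D_s²b)² + (16κ² + 2)(D_s b)² + (4(D_s κ)² + 4κ⁴ + 2κ² + 1)b²)·‖deriv c‖ dθ, where all integrands are evaluated at θ. (The left side is the standard Sobolev H² metric G^{H²}_c(h,h) = ∫ Σ_{i=0}^{2} |D_s^i h|² ds; the right side is 'Metric 4', which has the property that the horizontal and normal bundles coincide.) -/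
open scoped RealInnerProductSpace
open Real

/-! Auxiliary lemmas -/

noncomputable def Jc : EuclideanSpace ℝ (Fin 2) →L[ℝ] EuclideanSpace ℝ (Fin 2) :=
  LinearMap.toContinuousLinearMap
  { toFun := J
    map_add' := by
      intro x y; ext i; fin_cases i <;> simp [J, PiLp.add_apply] <;> try ring
    map_smul' := by
      intro r x; ext i; fin_cases i <;> simp [J, PiLp.smul_apply, smul_eq_mul] }

lemma Jc_eq (x : EuclideanSpace ℝ (Fin 2)) : Jc x = J x := rfl

lemma J_J (x : EuclideanSpace ℝ (Fin 2)) : J (J x) = -x := by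
  ext i; fin_cases i <;> simp [J]

lemma inner_two (x y : EuclideanSpace ℝ (Fin 2)) : ⟪x,y⟫ = x 0 * y 0 + x 1 * y 1 := by
  simp [PiLp.inner_apply, Fin.sum_univ_two]
  ring

lemma expand (v x : EuclideanSpace ℝ (Fin 2)) (hv : ⟪v,v⟫ = 1) :
    x = ⟪x, J v⟫ • J v + ⟪x, v⟫ • v := by
  rw [inner_two] at hv
  have h0 : J v 0 = -v 1 := by simp [J]
  have h1 : J v 1 = v 0 := by simp [J]
  ext i
  fin_cases i
  · simp only [Fin.mk_zero, Fin.mk_one, PiLp.add_apply, PiLp.smul_apply, smul_eq_mul,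
      inner_two, h0, h1]
    linear_combination -x 0 * hv
  · simp only [Fin.mk_zero, Fin.mk_one, PiLp.add_apply, PiLp.smul_apply, smul_eq_mul,
      inner_two, h0, h1]
    linear_combination -x 1 * hv

lemma norm_sq_expand (v x : EuclideanSpace ℝ (Fin 2)) (hv : ⟪v,v⟫ = 1) :
    ‖x‖^2 = ⟪x, J v⟫^2 + ⟪x, v⟫^2 := by
  rw [← real_inner_self_eq_norm_sq]
  rw [inner_two] at hv
  have h0 : J v 0 = -v 1 := by simp [J]
  have h1 : J v 1 = v 0 := by simp [J]
  simp only [inner_two, h0, h1]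
  linear_combination -(x 0 * x 0 + x 1 * x 1) * hv

section Curve

variable {c : ℝ → EuclideanSpace ℝ (Fin 2)}
  (hc : ContDiff ℝ (⊤:ℕ∞) c) (himm : ∀ θ : ℝ, deriv c θ ≠ 0)

include hc in
lemma smooth_deriv : ContDiff ℝ (⊤:ℕ∞) (deriv c) :=
  (contDiff_infty_iff_deriv.mp hc).2

include hc himm in
lemma smooth_rinv : ContDiff ℝ (⊤:ℕ∞) (fun θ => ‖deriv c θ‖⁻¹) :=
  ((smooth_deriv hc).norm ℝ himm).inv
    (fun θ => norm_ne_zero_iff.mpr (himm θ))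

include hc himm in
lemma smooth_Ds {E : Type*} [NormedAddCommGroup E] [NormedSpace ℝ E]
    {f : ℝ → E} (hf : ContDiff ℝ (⊤:ℕ∞) f) : ContDiff ℝ (⊤:ℕ∞) (Ds c f) :=
  (smooth_rinv hc himm).smul (contDiff_infty_iff_deriv.mp hf).2

include hc himm in
lemma smooth_tang : ContDiff ℝ (⊤:ℕ∞) (tang c) :=
  (smooth_rinv hc himm).smul (smooth_deriv hc)

include hc himm in
lemma smooth_nor : ContDiff ℝ (⊤:ℕ∞) (nor c) :=
  Jc.contDiff.comp (smooth_tang hc himm)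

include hc himm in
lemma smooth_kappa : ContDiff ℝ (⊤:ℕ∞) (kappa c) :=
  ContDiff.inner ℝ (smooth_Ds hc himm (smooth_tang hc himm)) (smooth_nor hc himm)

lemma Ds_inner {f g : ℝ → EuclideanSpace ℝ (Fin 2)}
    (hf : Differentiable ℝ f) (hg : Differentiable ℝ g) (θ : ℝ) :
    Ds c (fun t => ⟪f t, g t⟫) θ = ⟪Ds c f θ, g θ⟫ + ⟪f θ, Ds c g θ⟫ := by
  unfold Ds
  rw [deriv_inner_apply (𝕜 := ℝ) (hf θ) (hg θ)]
  simp only [real_inner_smul_left, real_inner_smul_right, smul_eq_mul]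
  ring

lemma Ds_mul {f g : ℝ → ℝ} (hf : Differentiable ℝ f) (hg : Differentiable ℝ g) (θ : ℝ) :
    Ds c (fun t => f t * g t) θ = Ds c f θ * g θ + f θ * Ds c g θ := by
  unfold Ds
  rw [deriv_fun_mul (hf θ) (hg θ)]
  simp only [smul_eq_mul]
  ring

lemma Ds_sub {f g : ℝ → ℝ} (hf : Differentiable ℝ f) (hg : Differentiable ℝ g) (θ : ℝ) :
    Ds c (fun t => f t - g t) θ = Ds c f θ - Ds c g θ := by
  unfold Ds
  rw [deriv_fun_sub (hf θ) (hg θ), smul_sub]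

lemma Ds_add {f g : ℝ → ℝ} (hf : Differentiable ℝ f) (hg : Differentiable ℝ g) (θ : ℝ) :
    Ds c (fun t => f t + g t) θ = Ds c f θ + Ds c g θ := by
  unfold Ds
  rw [deriv_fun_add (hf θ) (hg θ), smul_add]

lemma Ds_J {f : ℝ → EuclideanSpace ℝ (Fin 2)} (hf : Differentiable ℝ f) (θ : ℝ) :
    Ds c (fun t => J (f t)) θ = J (Ds c f θ) := by
  have hd : deriv (fun t => Jc (f t)) θ = Jc (deriv f θ) :=
    (Jc.hasFDerivAt.comp_hasDerivAt θ (hf θ).hasDerivAt).deriv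
  unfold Ds
  rw [show (fun t => J (f t)) = (fun t => Jc (f t)) from rfl, hd]
  exact (map_smul Jc _ _).symm

include himm in
lemma tang_unit (θ : ℝ) : ⟪tang c θ, tang c θ⟫ = 1 := by
  unfold tang
  rw [real_inner_smul_left, real_inner_smul_right, real_inner_self_eq_norm_sq]
  have := norm_pos_iff.mpr (himm θ)
  field_simp

include hc himm in
lemma Ds_tang_eq (θ : ℝ) : Ds c (tang c) θ = kappa c θ • nor c θ := by
  have hdiff : Differentiable ℝ (tang c) := (smooth_tang hc himm).differentiable (by simp)
  have h0 : Ds c (fun t => ⟪tang c t, tang c t⟫) θ = 0 := by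
    rw [show (fun t => ⟪tang c t, tang c t⟫) = fun _ => (1:ℝ) from funext (tang_unit himm)]
    unfold Ds
    simp
  rw [Ds_inner hdiff hdiff θ] at h0
  have hsymm : ⟪tang c θ, Ds c (tang c) θ⟫ = ⟪Ds c (tang c) θ, tang c θ⟫ := real_inner_comm _ _
  have horth : ⟪Ds c (tang c) θ, tang c θ⟫ = 0 := by rw [hsymm] at h0; linarith
  have hexp := expand (tang c θ) (Ds c (tang c) θ) (tang_unit himm θ)
  rw [horth] at hexp
  simpa [kappa, nor] using hexp

include hc himm in
lemma Ds_nor_eq (θ : ℝ) : Ds c (nor c) θ = -(kappa c θ) • tang c θ := by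
  have hdiff : Differentiable ℝ (tang c) := (smooth_tang hc himm).differentiable (by simp)
  have h1 : Ds c (nor c) θ = J (Ds c (tang c) θ) := Ds_J hdiff θ
  rw [h1, Ds_tang_eq hc himm, ← Jc_eq, map_smul, Jc_eq]
  show kappa c θ • J (J (tang c θ)) = _
  rw [J_J]
  module

end Curve


/-- **Theorem 3.4, case l = 2**: the metric `Metric 4` dominates the standard
Sobolev `H²` metric, where `a = ⟪h, n⟫`, `b = ⟪h, v⟫` and `ds = ‖deriv c‖ dθ`. -/
theorem second_order_metric_dominates_H2
    (c : ℝ → EuclideanSpace ℝ (Fin 2))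
    (hc : ContDiff ℝ (⊤ : ℕ∞) c) (hper : Function.Periodic c (2 * π))
    (himm : ∀ θ : ℝ, deriv c θ ≠ 0)
    (h : ℝ → EuclideanSpace ℝ (Fin 2))
    (hsm : ContDiff ℝ (⊤ : ℕ∞) h) (hhper : Function.Periodic h (2 * π))
    (a b : ℝ → ℝ)
    (hadef : a = fun θ => ⟪h θ, nor c θ⟫)
    (hbdef : b = fun θ => ⟪h θ, tang c θ⟫) :
    (∫ θ in (0:ℝ)..(2 * π),
        (‖h θ‖ ^ 2 + ‖Ds c h θ‖ ^ 2 + ‖Ds c (Ds c h) θ‖ ^ 2) * ‖deriv c θ‖) ≤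
      ∫ θ in (0:ℝ)..(2 * π),
        (4 * Ds c (Ds c a) θ ^ 2 + (16 * kappa c θ ^ 2 + 2) * Ds c a θ ^ 2
          + (4 * Ds c (kappa c) θ ^ 2 + 4 * kappa c θ ^ 4 + 2 * kappa c θ ^ 2 + 1)
            * a θ ^ 2
          + 4 * Ds c (Ds c b) θ ^ 2 + (16 * kappa c θ ^ 2 + 2) * Ds c b θ ^ 2
          + (4 * Ds c (kappa c) θ ^ 2 + 4 * kappa c θ ^ 4 + 2 * kappa c θ ^ 2 + 1)
            * b θ ^ 2) * ‖deriv c θ‖ := by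
  have hc' : ContDiff ℝ (⊤:ℕ∞) c := hc.of_le (by simp)
  have hsm' : ContDiff ℝ (⊤:ℕ∞) h := hsm.of_le (by simp)
  -- smoothness
  have sv : ContDiff ℝ (⊤:ℕ∞) (tang c) := smooth_tang hc' himm
  have sn : ContDiff ℝ (⊤:ℕ∞) (nor c) := smooth_nor hc' himm
  have sk : ContDiff ℝ (⊤:ℕ∞) (kappa c) := smooth_kappa hc' himm
  have sa : ContDiff ℝ (⊤:ℕ∞) a := by rw [hadef]; exact ContDiff.inner ℝ hsm' sn
  have sb : ContDiff ℝ (⊤:ℕ∞) b := by rw [hbdef]; exact ContDiff.inner ℝ hsm' sv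
  have sDh : ContDiff ℝ (⊤:ℕ∞) (Ds c h) := smooth_Ds hc' himm hsm'
  have sDDh : ContDiff ℝ (⊤:ℕ∞) (Ds c (Ds c h)) := smooth_Ds hc' himm sDh
  set p : ℝ → ℝ := fun θ => ⟪Ds c h θ, nor c θ⟫ with hpdef
  set q : ℝ → ℝ := fun θ => ⟪Ds c h θ, tang c θ⟫ with hqdef
  set P : ℝ → ℝ := fun θ => ⟪Ds c (Ds c h) θ, nor c θ⟫ with hPdef
  set Q : ℝ → ℝ := fun θ => ⟪Ds c (Ds c h) θ, tang c θ⟫ with hQdef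
  have sp : ContDiff ℝ (⊤:ℕ∞) p := ContDiff.inner ℝ sDh sn
  have sq : ContDiff ℝ (⊤:ℕ∞) q := ContDiff.inner ℝ sDh sv
  -- differentiability
  have dh : Differentiable ℝ h := hsm'.differentiable (by simp)
  have dv : Differentiable ℝ (tang c) := sv.differentiable (by simp)
  have dn : Differentiable ℝ (nor c) := sn.differentiable (by simp)
  have dk : Differentiable ℝ (kappa c) := sk.differentiable (by simp)
  have da : Differentiable ℝ a := sa.differentiable (by simp)
  have db : Differentiable ℝ b := sb.differentiable (by simp)
  have dDh : Differentiable ℝ (Ds c h) := sDh.differentiable (by simp)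
  have dp : Differentiable ℝ p := sp.differentiable (by simp)
  have dq : Differentiable ℝ q := sq.differentiable (by simp)
  -- first-order identities
  have ha' : ∀ θ, Ds c a θ = p θ - kappa c θ * b θ := by
    intro θ
    rw [hadef, Ds_inner dh dn θ, Ds_nor_eq hc' himm θ, hbdef]
    simp only [real_inner_smul_right, hpdef]
    ring
  have hb' : ∀ θ, Ds c b θ = q θ + kappa c θ * a θ := by
    intro θ
    rw [hbdef, Ds_inner dh dv θ, Ds_tang_eq hc' himm θ, hadef]
    simp only [real_inner_smul_right, hqdef]
  have hp' : ∀ θ, Ds c p θ = P θ - kappa c θ * q θ := by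
    intro θ
    rw [hpdef, Ds_inner dDh dn θ, Ds_nor_eq hc' himm θ]
    simp only [real_inner_smul_right, hPdef, hqdef]
    ring
  have hq' : ∀ θ, Ds c q θ = Q θ + kappa c θ * p θ := by
    intro θ
    rw [hqdef, Ds_inner dDh dv θ, Ds_tang_eq hc' himm θ]
    simp only [real_inner_smul_right, hQdef, hpdef]
  -- second-order identities
  have ha'' : ∀ θ, Ds c (Ds c a) θ
      = Ds c p θ - (Ds c (kappa c) θ * b θ + kappa c θ * Ds c b θ) := by
    intro θ
    rw [show Ds c a = fun t => p t - kappa c t * b t from funext ha']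
    rw [Ds_sub (g := fun t => kappa c t * b t) dp (dk.mul db) θ, Ds_mul dk db θ]
  have hb'' : ∀ θ, Ds c (Ds c b) θ
      = Ds c q θ + (Ds c (kappa c) θ * a θ + kappa c θ * Ds c a θ) := by
    intro θ
    rw [show Ds c b = fun t => q t + kappa c t * a t from funext hb']
    rw [Ds_add (g := fun t => kappa c t * a t) dq (dk.mul da) θ, Ds_mul dk da θ]
  -- expressions of P, Q in terms of a, b and their arclength derivatives
  have rP : ∀ θ, P θ = Ds c (Ds c a) θ + 2 * kappa c θ * Ds c b θ
      + Ds c (kappa c) θ * b θ - kappa c θ ^ 2 * a θ := by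
    intro θ
    linear_combination -(ha'' θ) - (hp' θ) - kappa c θ * (hb' θ)
  have rQ : ∀ θ, Q θ = Ds c (Ds c b) θ - 2 * kappa c θ * Ds c a θ
      - Ds c (kappa c) θ * a θ - kappa c θ ^ 2 * b θ := by
    intro θ
    linear_combination -(hb'' θ) - (hq' θ) + kappa c θ * (ha' θ)
  have rp : ∀ θ, p θ = Ds c a θ + kappa c θ * b θ := by
    intro θ; linear_combination -(ha' θ)
  have rq : ∀ θ, q θ = Ds c b θ - kappa c θ * a θ := by
    intro θ; linear_combination -(hb' θ)
  -- norm expansions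
  have e1 : ∀ θ, ‖h θ‖ ^ 2 = a θ ^ 2 + b θ ^ 2 := by
    intro θ
    have := norm_sq_expand (tang c θ) (h θ) (tang_unit himm θ)
    rw [hadef, hbdef]
    simpa [nor] using this
  have e2 : ∀ θ, ‖Ds c h θ‖ ^ 2 = p θ ^ 2 + q θ ^ 2 := by
    intro θ
    have := norm_sq_expand (tang c θ) (Ds c h θ) (tang_unit himm θ)
    simpa [nor, hpdef, hqdef] using this
  have e3 : ∀ θ, ‖Ds c (Ds c h) θ‖ ^ 2 = P θ ^ 2 + Q θ ^ 2 := by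
    intro θ
    have := norm_sq_expand (tang c θ) (Ds c (Ds c h) θ) (tang_unit himm θ)
    simpa [nor, hPdef, hQdef] using this
  -- continuity of the integrands
  have cr : Continuous (fun θ => ‖deriv c θ‖) := (smooth_deriv hc').continuous.norm
  have cint1 : Continuous (fun θ =>
      (‖h θ‖ ^ 2 + ‖Ds c h θ‖ ^ 2 + ‖Ds c (Ds c h) θ‖ ^ 2) * ‖deriv c θ‖) :=
    (((hsm'.continuous.norm.pow 2).add (sDh.continuous.norm.pow 2)).add
      (sDDh.continuous.norm.pow 2)).mul cr
  have cDa : Continuous (Ds c a) := (smooth_Ds hc' himm sa).continuous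
  have cDb : Continuous (Ds c b) := (smooth_Ds hc' himm sb).continuous
  have cDDa : Continuous (Ds c (Ds c a)) := (smooth_Ds hc' himm (smooth_Ds hc' himm sa)).continuous
  have cDDb : Continuous (Ds c (Ds c b)) := (smooth_Ds hc' himm (smooth_Ds hc' himm sb)).continuous
  have cDk : Continuous (Ds c (kappa c)) := (smooth_Ds hc' himm sk).continuous
  have ck : Continuous (kappa c) := sk.continuous
  have ca : Continuous a := sa.continuous
  have cb : Continuous b := sb.continuous
  have cint2 : Continuous (fun θ =>
      (4 * Ds c (Ds c a) θ ^ 2 + (16 * kappa c θ ^ 2 + 2) * Ds c a θ ^ 2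
          + (4 * Ds c (kappa c) θ ^ 2 + 4 * kappa c θ ^ 4 + 2 * kappa c θ ^ 2 + 1)
            * a θ ^ 2
          + 4 * Ds c (Ds c b) θ ^ 2 + (16 * kappa c θ ^ 2 + 2) * Ds c b θ ^ 2
          + (4 * Ds c (kappa c) θ ^ 2 + 4 * kappa c θ ^ 4 + 2 * kappa c θ ^ 2 + 1)
            * b θ ^ 2) * ‖deriv c θ‖) := by fun_prop
  -- pointwise comparison and conclusion
  apply intervalIntegral.integral_mono_on (by positivity)
    (cint1.intervalIntegrable _ _) (cint2.intervalIntegrable _ _)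
  intro θ _
  have hcoef : ‖h θ‖ ^ 2 + ‖Ds c h θ‖ ^ 2 + ‖Ds c (Ds c h) θ‖ ^ 2
      ≤ 4 * Ds c (Ds c a) θ ^ 2 + (16 * kappa c θ ^ 2 + 2) * Ds c a θ ^ 2
          + (4 * Ds c (kappa c) θ ^ 2 + 4 * kappa c θ ^ 4 + 2 * kappa c θ ^ 2 + 1)
            * a θ ^ 2
          + 4 * Ds c (Ds c b) θ ^ 2 + (16 * kappa c θ ^ 2 + 2) * Ds c b θ ^ 2
          + (4 * Ds c (kappa c) θ ^ 2 + 4 * kappa c θ ^ 4 + 2 * kappa c θ ^ 2 + 1)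
            * b θ ^ 2 := by
    rw [e1 θ, e2 θ, e3 θ, rp θ, rq θ, rP θ, rQ θ]
    set A := a θ; set B := b θ; set k := kappa c θ; set m := Ds c (kappa c) θ
    set dA := Ds c a θ; set dB := Ds c b θ
    set ddA := Ds c (Ds c a) θ; set ddB := Ds c (Ds c b) θ
    nlinarith [sq_nonneg (dA - k*B), sq_nonneg (dB + k*A),
      sq_nonneg (ddA - 2*k*dB), sq_nonneg (ddA - m*B), sq_nonneg (ddA + k^2*A),
      sq_nonneg (2*k*dB - m*B), sq_nonneg (2*k*dB + k^2*A), sq_nonneg (m*B + k^2*A),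
      sq_nonneg (ddB + 2*k*dA), sq_nonneg (ddB + m*A), sq_nonneg (ddB + k^2*B),
      sq_nonneg (2*k*dA - m*A), sq_nonneg (2*k*dA - k^2*B), sq_nonneg (m*A - k^2*B)]
  exact mul_le_mul_of_nonneg_right hcoef (norm_nonneg _)
end
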